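/- Suppose A x̂_q ≤ b (componentwise) and x̂_q ∉ P for all q ∈ {1, …, Q}, and let x̄ = (1/Q) Σ_{q=1}^Q x̂_q. Then every feasible solution (c, y, ε_1, …, ε_Q) of GIO_A(X̂) satisfies Σ_{q=1}^Q |ε_q| = Q · (bᵀ y − cᵀ x̄). Consequently, the optimal value of GIO_A(X̂) equals Q times the optimal value of the single-point problem GIO_A({x̄}) (which coincides with the absolute duality gap inverse problem for the alternate forward problem min{−cᵀ x : A x ≤ b} with observed decision x̄), and a pair (c, y) is part of an optimal solution of GIO_A(X̂) if and only if it is part of an optimal solution of GIO_A({x̄}). -/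
import Mathlib


open Matrix
open Pointwise

/-- Feasibility for the absolute duality gap inverse problem `GIO_A(X̂)`. -/
def FeasA {m n Q : ℕ} (A : Matrix (Fin m) (Fin n) ℝ) (b : Fin m → ℝ)
    (N : (Fin n → ℝ) → ℝ) (xhat : Fin Q → Fin n → ℝ)
    (c : Fin n → ℝ) (y : Fin m → ℝ) (ε : Fin Q → ℝ) : Prop :=
  Aᵀ.mulVec y = c ∧ (∀ i, 0 ≤ y i) ∧ (∀ q, c ⬝ᵥ xhat q = b ⬝ᵥ y + ε q) ∧ N c = 1

/-- Optimality for `GIO_A(X̂)`. -/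
def OptA {m n Q : ℕ} (A : Matrix (Fin m) (Fin n) ℝ) (b : Fin m → ℝ)
    (N : (Fin n → ℝ) → ℝ) (xhat : Fin Q → Fin n → ℝ)
    (c : Fin n → ℝ) (y : Fin m → ℝ) (ε : Fin Q → ℝ) : Prop :=
  FeasA A b N xhat c y ε ∧
    ∀ c' y' ε', FeasA A b N xhat c' y' ε' → ∑ q, |ε q| ≤ ∑ q, |ε' q|

/-- Auxiliary: transpose–dot-product identity. -/
lemma dot_trans_aux {m n : ℕ} (A : Matrix (Fin m) (Fin n) ℝ) (y : Fin m → ℝ)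
    (x : Fin n → ℝ) : (Aᵀ.mulVec y) ⬝ᵥ x = y ⬝ᵥ A.mulVec x := by
  rw [Matrix.mulVec_transpose, ← Matrix.dotProduct_mulVec]

/-- Auxiliary: if all data points are in the suboptimal region `A x ≤ b`, then every
feasible ε is componentwise nonpositive. -/
lemma eps_nonpos_aux {m n k : ℕ} (A : Matrix (Fin m) (Fin n) ℝ) (b : Fin m → ℝ)
    (N : (Fin n → ℝ) → ℝ) (xh : Fin k → Fin n → ℝ)
    (hle : ∀ q i, A.mulVec (xh q) i ≤ b i)
    (c : Fin n → ℝ) (y : Fin m → ℝ) (ε : Fin k → ℝ)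
    (hf : FeasA A b N xh c y ε) (q : Fin k) : ε q ≤ 0 := by
  obtain ⟨hc, hy, he, -⟩ := hf
  have h1 : c ⬝ᵥ xh q ≤ b ⬝ᵥ y := by
    rw [← hc, dot_trans_aux, dotProduct_comm]
    refine Finset.sum_le_sum fun i _ => ?_
    exact mul_le_mul_of_nonneg_right (hle q i) (hy i)
  have := he q
  linarith

/-- Auxiliary: value formula for feasible solutions. -/
lemma sum_abs_aux {m n k : ℕ} (A : Matrix (Fin m) (Fin n) ℝ) (b : Fin m → ℝ)
    (N : (Fin n → ℝ) → ℝ) (xh : Fin k → Fin n → ℝ)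
    (hle : ∀ q i, A.mulVec (xh q) i ≤ b i)
    (c : Fin n → ℝ) (y : Fin m → ℝ) (ε : Fin k → ℝ)
    (hf : FeasA A b N xh c y ε) :
    ∑ q, |ε q| = (k : ℝ) * (b ⬝ᵥ y) - ∑ q, c ⬝ᵥ xh q := by
  have h1 : ∀ q, |ε q| = b ⬝ᵥ y - c ⬝ᵥ xh q := by
    intro q
    have h2 := eps_nonpos_aux A b N xh hle c y ε hf q
    have h3 := hf.2.2.1 q
    rw [abs_of_nonpos h2]; linarith
  rw [Finset.sum_congr rfl fun q _ => h1 q, Finset.sum_sub_distrib,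
    Finset.sum_const, Finset.card_univ, Fintype.card_fin, nsmul_eq_mul]

theorem stmt_6
    (m n Q : ℕ) (hm : 0 < m) (hn : 0 < n) (hQ : 0 < Q)
    (A : Matrix (Fin m) (Fin n) ℝ) (b : Fin m → ℝ)
    (hrows : ∀ i, A i ≠ 0)
    (hPint : (interior {x : Fin n → ℝ | ∀ i, b i ≤ A.mulVec x i}).Nonempty)
    -- the normalization norm ‖·‖'
    (N : (Fin n → ℝ) → ℝ)
    (hN₁ : ∀ x y, N (x + y) ≤ N x + N y)
    (hN₂ : ∀ (a : ℝ) (x : Fin n → ℝ), N (a • x) = |a| * N x)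
    (hN₃ : ∀ x, x ≠ 0 → 0 < N x)
    -- all observed decisions satisfy A x̂_q ≤ b and x̂_q ∉ P
    (xhat : Fin Q → Fin n → ℝ)
    (hxle : ∀ q i, A.mulVec (xhat q) i ≤ b i)
    (hxnotP : ∀ q, ¬ ∀ i, b i ≤ A.mulVec (xhat q) i)
    -- the centroid x̄
    (xbar : Fin n → ℝ) (hxbar : xbar = (Q : ℝ)⁻¹ • ∑ q, xhat q) :
    -- 1. every feasible solution satisfies Σ|ε_q| = Q (bᵀ y − cᵀ x̄)
    (∀ c y ε, FeasA A b N xhat c y ε →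
      ∑ q, |ε q| = (Q : ℝ) * (b ⬝ᵥ y - c ⬝ᵥ xbar)) ∧
    -- 2. the optimal value of GIO_A(X̂) is Q times that of GIO_A({x̄})
    sInf {v : ℝ | ∃ c y ε, FeasA A b N xhat c y ε ∧ v = ∑ q, |ε q|} =
      (Q : ℝ) * sInf {v : ℝ | ∃ (c : Fin n → ℝ) (y : Fin m → ℝ) (ε : Fin 1 → ℝ),
        FeasA A b N (fun _ : Fin 1 => xbar) c y ε ∧ v = ∑ q, |ε q|} ∧
    -- 3. (c, y) is part of an optimal solution of GIO_A(X̂) iff of GIO_A({x̄})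
    ∀ c y, (∃ ε, OptA A b N xhat c y ε) ↔
      (∃ ε : Fin 1 → ℝ, OptA A b N (fun _ : Fin 1 => xbar) c y ε) := by
  have hQ0 : (Q : ℝ) ≠ 0 := Nat.cast_ne_zero.mpr hQ.ne'
  -- c ⬝ᵥ xbar
  have hdotbar : ∀ c : Fin n → ℝ, c ⬝ᵥ xbar = (Q : ℝ)⁻¹ * ∑ q, c ⬝ᵥ xhat q := by
    intro c
    rw [hxbar, dotProduct_smul, smul_eq_mul]
    congr 1
    simp only [dotProduct, Finset.sum_apply, Finset.mul_sum]
    exact Finset.sum_comm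
  -- A xbar ≤ b
  have hbarle : ∀ i, A.mulVec xbar i ≤ b i := by
    intro i
    have h1 : A.mulVec xbar i = (Q : ℝ)⁻¹ * ∑ q, A.mulVec (xhat q) i := by
      rw [hxbar]
      simp only [Matrix.mulVec, dotProduct, Pi.smul_apply, Finset.sum_apply,
        smul_eq_mul, Finset.mul_sum]
      rw [Finset.sum_comm]
      refine Finset.sum_congr rfl fun q _ => Finset.sum_congr rfl fun j _ => by ring
    rw [h1]
    have h2 : ∑ q, A.mulVec (xhat q) i ≤ (Q : ℝ) * b i := by
      calc ∑ q, A.mulVec (xhat q) i ≤ ∑ _q : Fin Q, b i :=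
            Finset.sum_le_sum fun q _ => hxle q i
        _ = (Q : ℝ) * b i := by simp [mul_comm]
    calc (Q : ℝ)⁻¹ * ∑ q, A.mulVec (xhat q) i ≤ (Q : ℝ)⁻¹ * ((Q : ℝ) * b i) :=
          mul_le_mul_of_nonneg_left h2 (by positivity)
      _ = b i := by field_simp
  have hbarle' : ∀ (q : Fin 1) i, A.mulVec ((fun _ : Fin 1 => xbar) q) i ≤ b i :=
    fun _ i => hbarle i
  -- Part 1
  have part1 : ∀ c y ε, FeasA A b N xhat c y ε →
      ∑ q, |ε q| = (Q : ℝ) * (b ⬝ᵥ y - c ⬝ᵥ xbar) := by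
    intro c y ε hf
    rw [sum_abs_aux A b N xhat hxle c y ε hf, hdotbar, mul_sub, mul_inv_cancel_left₀ hQ0]
  -- single-point value formula
  have single1 : ∀ c y (ε : Fin 1 → ℝ), FeasA A b N (fun _ : Fin 1 => xbar) c y ε →
      ∑ q, |ε q| = b ⬝ᵥ y - c ⬝ᵥ xbar := by
    intro c y ε hf
    have := sum_abs_aux A b N (fun _ : Fin 1 => xbar) hbarle' c y ε hf
    simpa using this
  -- transfer maps
  have toSingle : ∀ c y ε, FeasA A b N xhat c y ε →
      FeasA A b N (fun _ : Fin 1 => xbar) c y (fun _ => c ⬝ᵥ xbar - b ⬝ᵥ y) := by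
    intro c y ε hf
    exact ⟨hf.1, hf.2.1, fun q => by ring, hf.2.2.2⟩
  have toMulti : ∀ c y (ε : Fin 1 → ℝ), FeasA A b N (fun _ : Fin 1 => xbar) c y ε →
      FeasA A b N xhat c y (fun q => c ⬝ᵥ xhat q - b ⬝ᵥ y) := by
    intro c y ε hf
    exact ⟨hf.1, hf.2.1, fun q => by ring, hf.2.2.2⟩
  constructor
  · exact part1
  constructor
  -- Part 2
  · have hset : {v : ℝ | ∃ c y ε, FeasA A b N xhat c y ε ∧ v = ∑ q, |ε q|} =
        (Q : ℝ) • {v : ℝ | ∃ (c : Fin n → ℝ) (y : Fin m → ℝ) (ε : Fin 1 → ℝ),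
          FeasA A b N (fun _ : Fin 1 => xbar) c y ε ∧ v = ∑ q, |ε q|} := by
      ext v
      constructor
      · rintro ⟨c, y, ε, hf, rfl⟩
        refine ⟨b ⬝ᵥ y - c ⬝ᵥ xbar, ⟨c, y, fun _ => c ⬝ᵥ xbar - b ⬝ᵥ y,
          toSingle c y ε hf, ?_⟩, ?_⟩
        · rw [single1 c y _ (toSingle c y ε hf)]
        · simp only [smul_eq_mul]
          exact (part1 c y ε hf).symm
      · rintro ⟨t, ⟨c, y, ε, hf, rfl⟩, rfl⟩
        refine ⟨c, y, fun q => c ⬝ᵥ xhat q - b ⬝ᵥ y, toMulti c y ε hf, ?_⟩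
        rw [part1 c y _ (toMulti c y ε hf), single1 c y ε hf]
        simp [smul_eq_mul]
    rw [hset]
    exact Real.sInf_smul_of_nonneg (by positivity) _
  -- Part 3
  · intro c y
    constructor
    · rintro ⟨ε, hfeas, hopt⟩
      refine ⟨fun _ => c ⬝ᵥ xbar - b ⬝ᵥ y, toSingle c y ε hfeas, ?_⟩
      intro c' y' ε' hf'
      have h1 := hopt c' y' (fun q => c' ⬝ᵥ xhat q - b ⬝ᵥ y') (toMulti c' y' ε' hf')
      rw [part1 c y ε hfeas, part1 c' y' _ (toMulti c' y' ε' hf')] at h1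
      have h2 : b ⬝ᵥ y - c ⬝ᵥ xbar ≤ b ⬝ᵥ y' - c' ⬝ᵥ xbar := by
        have hQpos : (0 : ℝ) < Q := by positivity
        nlinarith
      rw [single1 c y _ (toSingle c y ε hfeas), single1 c' y' ε' hf']
      exact h2
    · rintro ⟨ε, hfeas, hopt⟩
      refine ⟨fun q => c ⬝ᵥ xhat q - b ⬝ᵥ y, toMulti c y ε hfeas, ?_⟩
      intro c' y' ε' hf'
      have h1 := hopt c' y' (fun _ => c' ⬝ᵥ xbar - b ⬝ᵥ y') (toSingle c' y' ε' hf')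
      rw [single1 c y ε hfeas, single1 c' y' _ (toSingle c' y' ε' hf')] at h1
      rw [part1 c y _ (toMulti c y ε hfeas), part1 c' y' ε' hf']
      have hQpos : (0 : ℝ) < Q := by positivity
      nlinarith
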